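/- For parking functions f and g, Park(f × g) = Park(f) × Park(g), and for a parking function f of length n and any permutation γ ∈ S_n, Park(f ∘ γ) = Park(f) ∘ γ. -/

import Mathlib

/-- `Park` of a nondecreasing function (0-indexed values). -/
def parkMono (g : ℕ → ℕ) : ℕ → ℕ
  | 0 => 0
  | j + 1 => min (parkMono g j + (g (j + 1) - g j)) (j + 1)

/-- Extension of `f : Fin n → Fin n` to an ℕ-valued function. -/
def extVal {n : ℕ} (f : Fin n → Fin n) : ℕ → ℕ :=
  fun k => if h : k < n then (f ⟨k, h⟩ : ℕ) else 0

/-- Concatenation `f × g`. -/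
def concatF {n m : ℕ} (f : Fin n → Fin n) (g : Fin m → Fin m) :
    Fin (n + m) → Fin (n + m) := fun i =>
  if h : (i : ℕ) < n then
    ⟨(f ⟨i, h⟩ : ℕ), Nat.lt_of_lt_of_le (f ⟨i, h⟩).isLt (Nat.le_add_right n m)⟩
  else
    ⟨n + (g ⟨(i : ℕ) - n, by have := i.isLt; omega⟩ : ℕ),
      Nat.add_lt_add_left (g ⟨(i : ℕ) - n, by have := i.isLt; omega⟩).isLt n⟩

/-!
`Park(f↑)` is constant on each block of equal values of `f↑`, and the nondecreasing
rearrangement of `f` is unique, so `Park(f)` does not depend on the sorting permutation; this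
gives `Park(f ∘ γ) = Park(f) ∘ γ` at once. For the concatenation, `f↑ × g↑` sorts `f × g`.
Since `Park(f↑)(n - 1) ≥ f↑(n - 1)`, the recursion for `f↑ × g↑` reaches its cap `n` at
position `n`, and from there on it is the recursion for `g↑` shifted by `n`.
-/

lemma parkMono_le (g : ℕ → ℕ) : ∀ j, parkMono g j ≤ j
  | 0 => le_rfl
  | _ + 1 => min_le_right _ _

lemma le_parkMono {g : ℕ → ℕ} (hg : ∀ j, g j ≤ j) : ∀ j, g j ≤ parkMono g j
  | 0 => hg 0
  | j + 1 => by
    have := le_parkMono hg j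
    have := hg (j + 1)
    simp only [parkMono]
    omega

lemma parkMono_congr {g g' : ℕ → ℕ} {j : ℕ} (h : ∀ k ≤ j, g k = g' k) :
    parkMono g j = parkMono g' j := by
  induction j with
  | zero => rfl
  | succ j ih =>
    simp only [parkMono, ih fun k hk => h k (by omega), h j (by omega), h (j + 1) le_rfl]

lemma parkMono_eq_of_forall_Icc_eq {g : ℕ → ℕ} {a b : ℕ} (hab : a ≤ b)
    (hg : ∀ j ∈ Set.Icc a b, g j = g a) : parkMono g b = parkMono g a := by
  induction b, hab using Nat.le_induction with
  | base => rfl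
  | succ b hab ih =>
    have hb1 := hg (b + 1) ⟨by omega, le_rfl⟩
    have hb := hg b ⟨hab, by omega⟩
    have := parkMono_le g b
    rw [← ih fun j hj => hg j ⟨hj.1, hj.2.trans b.le_succ⟩]
    simp only [parkMono, hb1, hb]
    omega

lemma parkMono_add_of_shift {F G H : ℕ → ℕ} {n K : ℕ} (hF : ∀ j, F j ≤ j)
    (hlt : ∀ j < n, G j = F j) (hge : ∀ k ≤ K, G (n + k) = n + H k) :
    parkMono G (n + K) = n + parkMono H K := by
  induction K with
  | zero =>
    cases n with
    | zero => rfl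
    | succ n =>
      -- `hF` gives `parkMono F n ≥ F n`, so the recursion for `G` hits its cap `n + 1` here.
      have hP : parkMono G n = parkMono F n := parkMono_congr fun k hk => hlt k (by omega)
      have hFn := le_parkMono hF n
      have hGn := hlt n (by omega)
      have hG := hge 0 le_rfl
      rw [Nat.add_zero] at hG ⊢
      simp only [parkMono, hP, hGn, hG]
      omega
  | succ K ih =>
    have hK := hge K (by omega)
    have hK1 := hge (K + 1) le_rfl
    have := parkMono_le H K
    rw [← Nat.add_assoc] at hK1 ⊢
    simp only [parkMono, ih fun k hk => hge k (by omega), hK, hK1]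
    omega

lemma extVal_val {n : ℕ} (f : Fin n → Fin n) (i : Fin n) : extVal f i = f i :=
  dif_pos i.isLt

lemma extVal_le_self {n : ℕ} {f : Fin n → Fin n} (hf : ∀ i, (f i : ℕ) ≤ i) (j : ℕ) :
    extVal f j ≤ j := by
  unfold extVal
  split
  · exact hf _
  · exact Nat.zero_le _

lemma parkMono_extVal_eq_of_eq {N : ℕ} {p : Fin N → Fin N} (hp : Monotone p) {a b : Fin N}
    (hab : p a = p b) : parkMono (extVal p) a = parkMono (extVal p) b := by
  wlog hle : a ≤ b generalizing a b
  · exact (this hab.symm (le_of_not_ge hle)).symm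
  refine (parkMono_eq_of_forall_Icc_eq hle fun j hj => ?_).symm
  have hjN : j < N := hj.2.trans_lt b.isLt
  rw [extVal_val, extVal, dif_pos hjN]
  have hlo : p a ≤ p ⟨j, hjN⟩ := hp (Fin.le_def.2 hj.1)
  have hhi : p ⟨j, hjN⟩ ≤ p b := hp (Fin.le_def.2 hj.2)
  rw [le_antisymm hhi (hab ▸ hlo), hab]

lemma eq_of_monotone_of_comp_perm_eq {α : Type*} [PartialOrder α] {N : ℕ} {p q : Fin N → α}
    (hp : Monotone p) (hq : Monotone q) {σ τ : Equiv.Perm (Fin N)} (h : p ∘ σ = q ∘ τ) :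
    p = q := by
  have hp' : p = (q ∘ τ) ∘ σ.symm := by rw [← h]; ext; simp
  have hq' : q = (q ∘ τ) ∘ τ.symm := by ext; simp
  calc p = (q ∘ τ) ∘ σ.symm := hp'
    _ = (q ∘ τ) ∘ τ.symm := Tuple.unique_monotone (hp' ▸ hp) (hq' ▸ hq)
    _ = q := hq'.symm

lemma parkMono_extVal_eq_of_comp_eq {N : ℕ} {p q : Fin N → Fin N}
    (hp : Monotone p) (hq : Monotone q) {σ τ : Equiv.Perm (Fin N)} (h : p ∘ σ = q ∘ τ)
    (i : Fin N) : parkMono (extVal p) (σ i) = parkMono (extVal q) (τ i) := by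
  obtain rfl := eq_of_monotone_of_comp_perm_eq hp hq h
  exact parkMono_extVal_eq_of_eq hp (congrFun h i)

section concat

variable {n m : ℕ}

@[simp]
lemma concatF_castAdd (f : Fin n → Fin n) (g : Fin m → Fin m) (i : Fin n) :
    concatF f g (Fin.castAdd m i) = Fin.castAdd m (f i) :=
  Fin.ext (by simp [concatF])

@[simp]
lemma concatF_natAdd (f : Fin n → Fin n) (g : Fin m → Fin m) (j : Fin m) :
    concatF f g (Fin.natAdd n j) = Fin.natAdd n (g j) :=
  Fin.ext (by simp [concatF])

def concatPerm (σ : Equiv.Perm (Fin n)) (τ : Equiv.Perm (Fin m)) : Equiv.Perm (Fin (n + m)) :=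
  finSumFinEquiv.permCongr (σ.sumCongr τ)

@[simp]
lemma concatPerm_castAdd (σ : Equiv.Perm (Fin n)) (τ : Equiv.Perm (Fin m)) (i : Fin n) :
    concatPerm σ τ (Fin.castAdd m i) = Fin.castAdd m (σ i) := by
  simp [concatPerm]

@[simp]
lemma concatPerm_natAdd (σ : Equiv.Perm (Fin n)) (τ : Equiv.Perm (Fin m)) (j : Fin m) :
    concatPerm σ τ (Fin.natAdd n j) = Fin.natAdd n (τ j) := by
  simp [concatPerm]

lemma concatF_comp_perm (f : Fin n → Fin n) (g : Fin m → Fin m)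
    (σ : Equiv.Perm (Fin n)) (τ : Equiv.Perm (Fin m)) :
    concatF (f ∘ σ) (g ∘ τ) = concatF f g ∘ concatPerm σ τ := by
  ext i
  induction i using Fin.addCases <;> simp

lemma Monotone.concatF {f : Fin n → Fin n} {g : Fin m → Fin m} (hf : Monotone f)
    (hg : Monotone g) : Monotone (concatF f g) := by
  intro a b hab
  induction a using Fin.addCases <;> induction b using Fin.addCases <;>
    simp only [concatF_castAdd, concatF_natAdd, Fin.le_def, Fin.val_castAdd,
      Fin.val_natAdd] at hab ⊢
  · exact hf (Fin.le_def.2 hab)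
  · omega
  · omega
  · exact Nat.add_le_add_left (hg (Fin.le_def.2 (by omega))) n

lemma parkMono_extVal_concatF_of_lt (f : Fin n → Fin n) (g : Fin m → Fin m) {i : ℕ}
    (hi : i < n) : parkMono (extVal (concatF f g)) i = parkMono (extVal f) i :=
  parkMono_congr fun k hk => by
    have hkn : k < n := hk.trans_lt hi
    simpa [extVal, hkn, hkn.trans_le (Nat.le_add_right n m)] using
      congrArg Fin.val (concatF_castAdd f g ⟨k, hkn⟩)

lemma parkMono_extVal_concatF_add {f : Fin n → Fin n} (hf : ∀ i, (f i : ℕ) ≤ i)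
    (g : Fin m → Fin m) {j : ℕ} (hj : j < m) :
    parkMono (extVal (concatF f g)) (n + j) = n + parkMono (extVal g) j := by
  refine parkMono_add_of_shift (extVal_le_self hf) (fun k hk => ?_) (fun k hk => ?_)
  · have hkn : k < n + m := by omega
    simpa [extVal, hk, hkn] using congrArg Fin.val (concatF_castAdd f g ⟨k, hk⟩)
  · have hkm : k < m := hk.trans_lt hj
    simpa [extVal, hkm] using congrArg Fin.val (concatF_natAdd f g ⟨k, hkm⟩)

end concat

/-- `Park(f × g) = Park(f) × Park(g)` and `Park(f ∘ γ) = Park(f) ∘ γ`.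
`Park` of a parking function `f = f↑ ∘ σ` (nondecreasing `f↑` with `f↑(i) ≤ i`,
`σ` a permutation) is `Park(f↑) ∘ σ`, stated here for arbitrary such decompositions. -/
theorem park_concat_and_park_comp (n m : ℕ)
    (f : Fin n → Fin n) (g : Fin m → Fin m)
    (fm : Fin n → Fin n) (fσ : Equiv.Perm (Fin n))
    (gm : Fin m → Fin m) (gσ : Equiv.Perm (Fin m))
    (hm : Fin (n + m) → Fin (n + m)) (hσ : Equiv.Perm (Fin (n + m)))
    (γ : Equiv.Perm (Fin n))
    (km : Fin n → Fin n) (kσ : Equiv.Perm (Fin n))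
    (hfm : Monotone fm) (hfm' : ∀ i : Fin n, (fm i : ℕ) ≤ (i : ℕ)) (hf : f = fm ∘ fσ)
    (hgm : Monotone gm) (hg : g = gm ∘ gσ)
    (hhm : Monotone hm)
    (hh : concatF f g = hm ∘ hσ)
    (hkm : Monotone km)
    (hk : f ∘ γ = km ∘ kσ) :
    (∀ i : Fin (n + m),
      parkMono (extVal hm) (hσ i) =
        if h : (i : ℕ) < n then parkMono (extVal fm) (fσ ⟨i, h⟩)
        else n + parkMono (extVal gm) (gσ ⟨(i : ℕ) - n, by have := i.isLt; omega⟩)) ∧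
    (∀ i : Fin n, parkMono (extVal km) (kσ i) = parkMono (extVal fm) (fσ (γ i))) := by
  refine ⟨fun i => ?_, fun i => ?_⟩
  · have hsort : hm ∘ hσ = concatF fm gm ∘ concatPerm fσ gσ := by
      rw [← hh, hf, hg, concatF_comp_perm]
    rw [parkMono_extVal_eq_of_comp_eq hhm (hfm.concatF hgm) hsort]
    induction i using Fin.addCases with
    | left i => simpa using parkMono_extVal_concatF_of_lt fm gm (fσ i).isLt
    | right j => simpa using parkMono_extVal_concatF_add hfm' gm (gσ j).isLt
  · have hsort : km ∘ kσ = fm ∘ (γ.trans fσ) := by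
      rw [← hk, hf]
      rfl
    exact parkMono_extVal_eq_of_comp_eq hkm hfm hsort i
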